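/- arXiv:2504.09913 — 2 statements merged into one kernel-verified Lean document; each statement's English description precedes it below -/
import Mathlib

section
/- Consider a finite MDP such that P^π g⋆ = g⋆ for every deterministic policy π, where (g⋆, h⋆) is a solution of the modified Bellman equations. Run Rx-VI with λ_k = 1/2 for all k ≥ 1 and starting point V^0, with π_k a greedy policy for V^k. Then for every k ≥ 1, ‖g⋆ − g^{π_k}‖_∞ ≤ ‖TV^k − V^k − g⋆‖_∞ ≤ 4‖V^0 − h⋆‖_∞ / √(π k), where π in the denominator denotes the mathematical constant 3.141592…. -/
open Finset Filter

noncomputable section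

/-- A finite Markov decision process: a transition kernel `P` assigning to each
state-action pair a probability distribution over states, and a reward `r`. -/
structure FinMDP (S A : Type) [Fintype S] [Fintype A] where
  P : S → A → S → ℝ
  r : S → A → ℝ
  P_nonneg : ∀ s a s', 0 ≤ P s a s'
  P_sum_one : ∀ s a, ∑ s', P s a s' = 1

variable {S A : Type} [Fintype S] [Nonempty S] [Fintype A] [Nonempty A]

/-- The transition operator `P^π` induced by a deterministic policy `π`. -/
def Pop (M : FinMDP S A) (p : S → A) (V : S → ℝ) : S → ℝ :=
  fun s => ∑ s', M.P s (p s) s' * V s'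

/-- The reward vector `r^π` induced by a deterministic policy `π`. -/
def rPol (M : FinMDP S A) (p : S → A) : S → ℝ := fun s => M.r s (p s)

/-- The Bellman optimality operator `T`. -/
def bellman (M : FinMDP S A) (V : S → ℝ) : S → ℝ :=
  fun s => Finset.univ.sup' Finset.univ_nonempty
    (fun a => M.r s a + ∑ s', M.P s a s' * V s')

/-- A deterministic policy `π` is greedy for `V` if `r^π + P^π V = T V`. -/
def IsGreedy (M : FinMDP S A) (p : S → A) (V : S → ℝ) : Prop :=
  rPol M p + Pop M p V = bellman M V

/-- `(g, h)` is a solution of the modified Bellman equations: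
`max_π P^π g = g`, `max_π (r^π + P^π h) = h + g` (entrywise maxima over
deterministic policies, equivalently over actions), and some deterministic
policy attains both maxima simultaneously. -/
def IsMBESolution (M : FinMDP S A) (g h : S → ℝ) : Prop :=
  (∀ s, (Finset.univ.sup' Finset.univ_nonempty
      fun a => ∑ s', M.P s a s' * g s') = g s) ∧
  (∀ s, bellman M h s = h s + g s) ∧
  (∃ p : S → A, Pop M p g = g ∧ rPol M p + Pop M p h = h + g)

/-- The average reward `g^π(s) = liminf_{T→∞} (1/T) ∑_{t<T} ((P^π)^t r^π)(s)`. -/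
def avgReward (M : FinMDP S A) (p : S → A) : S → ℝ :=
  fun s => Filter.liminf
    (fun T : ℕ => (1 / (T : ℝ)) * ∑ t ∈ Finset.range T, ((Pop M p)^[t] (rPol M p)) s)
    Filter.atTop

/-! ### Auxiliary combinatorics: partial sums of binomial rows. -/

namespace RxVIAux

/-- Partial sum of a binomial row: `∑_{x < a} C(N,x)`. -/
def Hs (N a : ℕ) : ℕ := ∑ x ∈ range a, N.choose x

lemma Hs_pascal (N a : ℕ) : Hs (N+1) (a+1) = Hs N (a+1) + Hs N a := by
  induction a with
  | zero => simp [Hs]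
  | succ a ih =>
    have h1 : Hs (N+1) (a+1+1) = Hs (N+1) (a+1) + (N+1).choose (a+1) :=
      Finset.sum_range_succ _ _
    have h2 : Hs N (a+1+1) = Hs N (a+1) + N.choose (a+1) := Finset.sum_range_succ _ _
    have h3 : Hs N (a+1) = Hs N a + N.choose a := Finset.sum_range_succ _ _
    have h4 : (N+1).choose (a+1) = N.choose a + N.choose (a+1) := Nat.choose_succ_succ _ _
    omega

lemma Hs_full (N a : ℕ) (h : N + 1 ≤ a) : Hs N a = 2 ^ N := by
  have : Hs N a = ∑ x ∈ range (N+1), N.choose x := by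
    unfold Hs
    refine (Finset.sum_subset (Finset.range_subset_range.2 h) ?_).symm
    intro x _ hx
    exact Nat.choose_eq_zero_of_lt (by simpa using hx)
  rw [this, Nat.sum_range_choose]

lemma Hs_half (n : ℕ) : Hs (2*n) n + Hs (2*n) (n+1) = 4 ^ n := by
  have hsymm : ∀ j ∈ range (n+1), (2*n).choose (n + j) = (2*n).choose (n - j) := by
    intro j hj
    have hj' : j ≤ n := by simpa using Nat.lt_succ_iff.mp (Finset.mem_range.mp hj)
    rw [← Nat.choose_symm (by omega : n + j ≤ 2*n)]
    congr 1
    omega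
  have hrev : ∑ j ∈ range (n+1), (2*n).choose (n - j) = ∑ j ∈ range (n+1), (2*n).choose j := by
    have := Finset.sum_range_reflect (fun j => (2*n).choose (n - j)) (n+1)
    simpa [Nat.sub_sub_self, Nat.lt_succ_iff] using this.symm.trans (by
      apply Finset.sum_congr rfl
      intro j hj
      have hj' : j ≤ n := Nat.lt_succ_iff.mp (Finset.mem_range.mp hj)
      congr 1
      omega)
  have hsplit : Hs (2*n) (2*n+1) = Hs (2*n) n + ∑ j ∈ range (n+1), (2*n).choose (n + j) := by
    unfold Hs
    rw [show 2*n+1 = n + (n+1) by ring, Finset.sum_range_add]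
  have htot : Hs (2*n) (2*n+1) = 2 ^ (2*n) := Hs_full _ _ (le_refl _)
  have h2 : ∑ j ∈ range (n+1), (2*n).choose (n + j) = Hs (2*n) (n+1) := by
    rw [Finset.sum_congr rfl hsymm, hrev]; rfl
  have : (4:ℕ)^n = 2^(2*n) := by rw [pow_mul]; norm_num
  omega

/-- Upper-bound sequence for `‖T x_j - x_i‖ / (2 d)` in the KM iteration. -/
def uu (i k : ℕ) : ℝ := ((Hs (2*i+k) (i+k+1) : ℝ) + (Hs (2*i+k) (i+k+2) : ℝ)) / 2^(2*i+k) - 1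

/-- Upper-bound sequence for `‖x_j - x_i‖ / (2 d)` in the KM iteration. -/
def vv (i k : ℕ) : ℝ := ((Hs (2*i+k) (i+k) : ℝ) + (Hs (2*i+k) (i+k+1) : ℝ)) / 2^(2*i+k) - 1

lemma uu_zero (k : ℕ) : uu 0 k = 1 := by
  unfold uu
  rw [Hs_full (2*0+k) (0+k+1) (by omega), Hs_full (2*0+k) (0+k+2) (by omega)]
  have : (2:ℝ)^(2*0+k) ≠ 0 := by positivity
  push_cast
  field_simp
  norm_num

lemma vv_zero (i : ℕ) : vv i 0 = 0 := by
  unfold vv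
  simp only [Nat.add_zero]
  have h := Hs_half i
  have hc : ((Hs (2*i) i : ℝ) + (Hs (2*i) (i+1) : ℝ)) = 2^(2*i) := by
    have h' := congrArg (Nat.cast : ℕ → ℝ) h
    push_cast at h'
    rw [h']
    rw [pow_mul]
    norm_num
  rw [hc]
  have : (2:ℝ)^(2*i) ≠ 0 := by positivity
  field_simp
  norm_num

lemma uu_rec (i k : ℕ) : uu (i+1) k = (uu i (k+1) + vv i (k+1)) / 2 := by
  unfold uu vv
  have p1 : Hs (2*(i+1)+k) ((i+1)+k+1) = Hs (2*i+(k+1)) (i+(k+1)+1) + Hs (2*i+(k+1)) (i+(k+1)) := by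
    have := Hs_pascal (2*i+(k+1)) (i+(k+1))
    convert this using 2 <;> omega
  have p2 : Hs (2*(i+1)+k) ((i+1)+k+2) = Hs (2*i+(k+1)) (i+(k+1)+2) + Hs (2*i+(k+1)) (i+(k+1)+1) := by
    have := Hs_pascal (2*i+(k+1)) (i+(k+1)+1)
    convert this using 2 <;> omega
  rw [p1, p2]
  have hn : (2:ℝ)^(2*(i+1)+k) = 2 * 2^(2*i+(k+1)) := by
    rw [show 2*(i+1)+k = (2*i+(k+1))+1 by ring]; ring
  rw [hn]
  have hne : (2:ℝ)^(2*i+(k+1)) ≠ 0 := by positivity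
  push_cast
  field_simp
  ring

lemma vv_rec (i k : ℕ) : vv i (k+1) = (vv i k + uu i k) / 2 := by
  unfold uu vv
  have p1 : Hs (2*i+(k+1)) (i+(k+1)) = Hs (2*i+k) (i+k+1) + Hs (2*i+k) (i+k) := by
    have := Hs_pascal (2*i+k) (i+k)
    convert this using 2 <;> omega
  have p2 : Hs (2*i+(k+1)) (i+(k+1)+1) = Hs (2*i+k) (i+k+2) + Hs (2*i+k) (i+k+1) := by
    have := Hs_pascal (2*i+k) (i+k+1)
    convert this using 2 <;> omega
  rw [p1, p2]
  have hn : (2:ℝ)^(2*i+(k+1)) = 2 * 2^(2*i+k) := by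
    rw [show 2*i+(k+1) = (2*i+k)+1 by ring]; ring
  rw [hn]
  have hne : (2:ℝ)^(2*i+k) ≠ 0 := by positivity
  push_cast
  field_simp
  ring

/-- `β_n = C(2n,n)/4^n`. -/
def beta (n : ℕ) : ℝ := (Nat.centralBinom n : ℝ) / 4^n

lemma beta_nonneg (n : ℕ) : 0 ≤ beta n := by
  unfold beta; positivity

lemma uu_final (n : ℕ) : uu n 0 ≤ 2 * beta n := by
  unfold uu beta
  simp only [Nat.add_zero]
  have h1 : Hs (2*n) (n+1) = Hs (2*n) n + (2*n).choose n := Finset.sum_range_succ _ _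
  have h2 : Hs (2*n) (n+2) = Hs (2*n) (n+1) + (2*n).choose (n+1) := Finset.sum_range_succ _ _
  have h3 := Hs_half n
  have hle : (2*n).choose (n+1) ≤ (2*n).choose n := by
    have := Nat.choose_le_middle (n+1) (2*n)
    simpa [Nat.mul_div_cancel_left n (by norm_num : 0 < 2)] using this
  have hcb : Nat.centralBinom n = (2*n).choose n := rfl
  have hkey : (Hs (2*n) (n+1) : ℕ) + Hs (2*n) (n+2) ≤ 2^(2*n) + 2 * (2*n).choose n := by
    have h4 : (4:ℕ)^n = 2^(2*n) := by rw [pow_mul]; norm_num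
    omega
  have hcast : ((Hs (2*n) (n+1) : ℝ) + (Hs (2*n) (n+2) : ℝ)) ≤
      2^(2*n) + 2 * ((2*n).choose n : ℝ) := by
    have := (Nat.cast_le (α := ℝ)).2 hkey
    push_cast at this
    convert this using 2
  have hpos : (0:ℝ) < (2:ℝ)^(2*n) := by positivity
  have h4 : ((4:ℝ))^n = 2^(2*n) := by rw [pow_mul]; norm_num
  rw [hcb, h4, div_sub_one (ne_of_gt hpos), ← mul_div_assoc,
    div_le_div_iff₀ hpos hpos]
  nlinarith [hcast, hpos, Nat.cast_nonneg (α := ℝ) ((2*n).choose n)]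

lemma beta_le (n : ℕ) (hn : 1 ≤ n) : beta n * Real.sqrt (Real.pi * n) ≤ 1 := by
  have hW := Real.Wallis.le_W n
  have hWf := Real.Wallis.W_eq_factorial_ratio n
  have hfact : (Nat.centralBinom n : ℝ) * (n.factorial : ℝ) * (n.factorial : ℝ) =
      ((2*n).factorial : ℝ) := by
    have := Nat.choose_mul_factorial_mul_factorial (show n ≤ 2*n by omega)
    have h2 : 2*n - n = n := by omega
    rw [h2] at this
    exact_mod_cast congrArg (Nat.cast : ℕ → ℝ) this
  have hfne : (n.factorial : ℝ) ≠ 0 := by positivity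
  have h2fne : ((2*n).factorial : ℝ) ≠ 0 := by positivity
  have hiden : beta n ^ 2 * (2 * (n:ℝ) + 1) * Real.Wallis.W n = 1 := by
    rw [hWf]
    unfold beta
    have h16 : (2:ℝ)^(4*n) = ((4:ℝ)^n)^2 := by
      rw [← pow_mul]
      rw [show (4:ℝ) = 2^2 by norm_num, ← pow_mul]
      congr 1
      omega
    rw [h16]
    have hcb2 : (Nat.centralBinom n : ℝ) =
        ((2*n).factorial : ℝ) / ((n.factorial : ℝ) * (n.factorial : ℝ)) := by
      field_simp
      linarith [hfact]
    rw [hcb2]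
    have h4ne : (4:ℝ)^n ≠ 0 := by positivity
    have h2n1 : (2*(n:ℝ)+1) ≠ 0 := by positivity
    field_simp
  have hπ := Real.pi_pos
  have hWpos := Real.Wallis.W_pos n
  have h2n1pos : (0:ℝ) < 2*(n:ℝ)+1 := by positivity
  have hb2 : beta n ^ 2 = 1 / ((2*(n:ℝ)+1) * Real.Wallis.W n) := by
    field_simp
    nlinarith [hiden]
  have hkey : Real.pi * n * beta n ^ 2 ≤ 1 := by
    rw [hb2, mul_one_div, div_le_one (by positivity)]
    have hfrac : Real.pi * (n:ℝ) ≤ (2*(n:ℝ)+1) * (((2*(n:ℝ)+1)/(2*(n:ℝ)+2)) * (Real.pi/2)) := by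
      have h2n2 : (0:ℝ) < 2*(n:ℝ)+2 := by positivity
      rw [← sub_nonneg]
      have heq : (2*(n:ℝ)+1) * (((2*(n:ℝ)+1)/(2*(n:ℝ)+2)) * (Real.pi/2)) - Real.pi * n =
          Real.pi / (2*(2*(n:ℝ)+2)) := by
        field_simp
        ring
      rw [heq]
      positivity
    calc Real.pi * (n:ℝ) ≤ _ := hfrac
      _ ≤ (2*(n:ℝ)+1) * Real.Wallis.W n := mul_le_mul_of_nonneg_left hW (le_of_lt h2n1pos)
  have hsq : (beta n * Real.sqrt (Real.pi * n)) ^ 2 ≤ 1 := by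
    rw [mul_pow, Real.sq_sqrt (by positivity : (0:ℝ) ≤ Real.pi * n)]
    nlinarith [hkey]
  nlinarith [hsq, mul_nonneg (beta_nonneg n) (Real.sqrt_nonneg (Real.pi * n))]

/-! ### The Krasnoselskii–Mann rate for `λ = 1/2`. -/

variable {E : Type*} [NormedAddCommGroup E] [NormedSpace ℝ E]

lemma km_rate (f : E → E) (hf : ∀ x y, ‖f x - f y‖ ≤ ‖x - y‖) (h : E) (hfix : f h = h)
    (W : ℕ → E) (hW : ∀ n, W (n+1) = (1/2 : ℝ) • W n + (1/2 : ℝ) • f (W n)) (n : ℕ) :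
    ‖f (W n) - W n‖ ≤ 2 * ‖W 0 - h‖ * uu n 0 := by
  set d := ‖W 0 - h‖ with hd
  have hd0 : 0 ≤ d := norm_nonneg _
  have hball : ∀ m, ‖W m - h‖ ≤ d := by
    intro m
    induction m with
    | zero => exact le_of_eq rfl
    | succ m ih =>
      have : W (m+1) - h = (1/2 : ℝ) • (W m - h) + (1/2 : ℝ) • (f (W m) - f h) := by
        rw [hW m, hfix]
        module
      rw [this]
      calc ‖(1/2 : ℝ) • (W m - h) + (1/2 : ℝ) • (f (W m) - f h)‖
          ≤ ‖(1/2 : ℝ) • (W m - h)‖ + ‖(1/2 : ℝ) • (f (W m) - f h)‖ := norm_add_le _ _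
        _ = (1/2) * ‖W m - h‖ + (1/2) * ‖f (W m) - f h‖ := by
            rw [norm_smul, norm_smul]; norm_num
        _ ≤ (1/2) * d + (1/2) * d := by
            have h2 := hf (W m) h
            linarith [le_trans h2 ih]
        _ = d := by ring
  have idr : ∀ i j : ℕ, f (W j) - W (i+1) =
      (1/2 : ℝ) • (f (W j) - W i) + (1/2 : ℝ) • (f (W j) - f (W i)) := by
    intro i j
    rw [hW i]
    module
  have ids : ∀ i j : ℕ, W (j+1) - W i =
      (1/2 : ℝ) • (W j - W i) + (1/2 : ℝ) • (f (W j) - W i) := by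
    intro i j
    rw [hW j]
    module
  have hr0 : ∀ j, ‖f (W j) - W 0‖ ≤ 2 * d := by
    intro j
    have heq : f (W j) - W 0 = (f (W j) - f h) + (h - W 0) := by
      rw [hfix]; abel
    rw [heq]
    calc ‖(f (W j) - f h) + (h - W 0)‖
        ≤ ‖f (W j) - f h‖ + ‖h - W 0‖ := norm_add_le _ _
      _ ≤ d + d := by
          have h1 := le_trans (hf (W j) h) (hball j)
          have h2 : ‖h - W 0‖ = d := by rw [hd, norm_sub_rev]
          linarith
      _ = 2 * d := by ring
  have main : ∀ i, (∀ k, ‖f (W (i+k)) - W i‖ ≤ 2 * d * uu i k) ∧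
      (∀ k, ‖W (i+k) - W i‖ ≤ 2 * d * vv i k) := by
    intro i
    induction i with
    | zero =>
      constructor
      · intro k
        rw [uu_zero, mul_one]
        exact hr0 (0+k)
      · intro k
        induction k with
        | zero => simp [vv_zero]
        | succ k ihk =>
          have hstep : W (0+(k+1)) = W ((0+k)+1) := by norm_num
          rw [hstep, ids 0 (0+k), vv_rec]
          have hr : ‖f (W (0+k)) - W 0‖ ≤ 2 * d * uu 0 k := by
            rw [uu_zero, mul_one]; exact hr0 (0+k)
          calc ‖(1/2 : ℝ) • (W (0+k) - W 0) + (1/2 : ℝ) • (f (W (0+k)) - W 0)‖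
              ≤ ‖(1/2 : ℝ) • (W (0+k) - W 0)‖ + ‖(1/2 : ℝ) • (f (W (0+k)) - W 0)‖ :=
                norm_add_le _ _
            _ = (1/2) * ‖W (0+k) - W 0‖ + (1/2) * ‖f (W (0+k)) - W 0‖ := by
                rw [norm_smul, norm_smul]; norm_num
            _ ≤ (1/2) * (2 * d * vv 0 k) + (1/2) * (2 * d * uu 0 k) := by linarith
            _ = 2 * d * ((vv 0 k + uu 0 k)/2) := by ring
    | succ i ih =>
      have hr : ∀ k, ‖f (W ((i+1)+k)) - W (i+1)‖ ≤ 2 * d * uu (i+1) k := by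
        intro k
        have hj : (i+1)+k = i+(k+1) := by omega
        rw [hj, idr i (i+(k+1)), uu_rec]
        have h1 : ‖f (W (i+(k+1))) - W i‖ ≤ 2 * d * uu i (k+1) := ih.1 (k+1)
        have h2 : ‖f (W (i+(k+1))) - f (W i)‖ ≤ 2 * d * vv i (k+1) :=
          le_trans (hf _ _) (ih.2 (k+1))
        calc ‖(1/2 : ℝ) • (f (W (i+(k+1))) - W i) + (1/2 : ℝ) • (f (W (i+(k+1))) - f (W i))‖
            ≤ ‖(1/2 : ℝ) • (f (W (i+(k+1))) - W i)‖ +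
              ‖(1/2 : ℝ) • (f (W (i+(k+1))) - f (W i))‖ := norm_add_le _ _
          _ = (1/2) * ‖f (W (i+(k+1))) - W i‖ + (1/2) * ‖f (W (i+(k+1))) - f (W i)‖ := by
              rw [norm_smul, norm_smul]; norm_num
          _ ≤ (1/2) * (2 * d * uu i (k+1)) + (1/2) * (2 * d * vv i (k+1)) := by linarith
          _ = 2 * d * ((uu i (k+1) + vv i (k+1))/2) := by ring
      refine ⟨hr, ?_⟩
      intro k
      induction k with
      | zero => simp [vv_zero]
      | succ k ihk =>
        have hstep : (i+1)+(k+1) = ((i+1)+k)+1 := by omega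
        rw [hstep, ids (i+1) ((i+1)+k), vv_rec]
        have h2 := hr k
        calc ‖(1/2 : ℝ) • (W ((i+1)+k) - W (i+1)) + (1/2 : ℝ) • (f (W ((i+1)+k)) - W (i+1))‖
            ≤ ‖(1/2 : ℝ) • (W ((i+1)+k) - W (i+1))‖ +
              ‖(1/2 : ℝ) • (f (W ((i+1)+k)) - W (i+1))‖ := norm_add_le _ _
          _ = (1/2) * ‖W ((i+1)+k) - W (i+1)‖ + (1/2) * ‖f (W ((i+1)+k)) - W (i+1)‖ := by
              rw [norm_smul, norm_smul]; norm_num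
          _ ≤ (1/2) * (2 * d * vv (i+1) k) + (1/2) * (2 * d * uu (i+1) k) := by linarith
          _ = 2 * d * ((vv (i+1) k + uu (i+1) k)/2) := by ring
  have := (main n).1 0
  simpa using this

end RxVIAux

/-! ### MDP helper lemmas. -/

lemma row_abs_le (M : FinMDP S A) (X : S → ℝ) (s : S) (a : A) :
    |∑ s', M.P s a s' * X s'| ≤ ‖X‖ := by
  calc |∑ s', M.P s a s' * X s'| ≤ ∑ s', |M.P s a s' * X s'| :=
        Finset.abs_sum_le_sum_abs _ _
    _ = ∑ s', M.P s a s' * |X s'| := by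
        apply Finset.sum_congr rfl
        intro s' _
        rw [abs_mul, abs_of_nonneg (M.P_nonneg s a s')]
    _ ≤ ∑ s', M.P s a s' * ‖X‖ := by
        apply Finset.sum_le_sum
        intro s' _
        apply mul_le_mul_of_nonneg_left _ (M.P_nonneg s a s')
        have := norm_le_pi_norm X s'
        simpa [Real.norm_eq_abs] using this
    _ = ‖X‖ := by rw [← Finset.sum_mul, M.P_sum_one, one_mul]

lemma Pop_abs_le (M : FinMDP S A) (p : S → A) (X : S → ℝ) (s : S) :
    |Pop M p X s| ≤ ‖X‖ := row_abs_le M X s (p s)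

lemma Pop_norm_le (M : FinMDP S A) (p : S → A) (X : S → ℝ) : ‖Pop M p X‖ ≤ ‖X‖ := by
  rw [pi_norm_le_iff_of_nonneg (norm_nonneg X)]
  intro s
  simpa [Real.norm_eq_abs] using Pop_abs_le M p X s

lemma Pop_iter_norm_le (M : FinMDP S A) (p : S → A) (t : ℕ) (X : S → ℝ) :
    ‖(Pop M p)^[t] X‖ ≤ ‖X‖ := by
  induction t generalizing X with
  | zero => simp
  | succ t ih =>
    rw [Function.iterate_succ_apply]
    exact le_trans (ih _) (Pop_norm_le M p X)

lemma Pop_add (M : FinMDP S A) (p : S → A) (X Y : S → ℝ) :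
    Pop M p (X + Y) = Pop M p X + Pop M p Y := by
  funext s
  simp only [Pop, Pi.add_apply, mul_add, Finset.sum_add_distrib]

lemma Pop_sub (M : FinMDP S A) (p : S → A) (X Y : S → ℝ) :
    Pop M p (X - Y) = Pop M p X - Pop M p Y := by
  funext s
  simp only [Pop, Pi.sub_apply, mul_sub, Finset.sum_sub_distrib]

lemma sup'_add_const {f : A → ℝ} (c : ℝ) :
    Finset.univ.sup' Finset.univ_nonempty (fun a => f a + c) =
      Finset.univ.sup' Finset.univ_nonempty f + c := by
  apply le_antisymm
  · apply Finset.sup'_le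
    intro a ha
    exact add_le_add_left (Finset.le_sup' f ha) c
  · have hle : ∀ a ∈ Finset.univ, f a ≤
        Finset.univ.sup' Finset.univ_nonempty (fun a => f a + c) - c := by
      intro a ha
      have := Finset.le_sup' (fun a => f a + c) ha
      linarith
    have := Finset.sup'_le Finset.univ_nonempty f hle
    linarith

lemma bellman_abs_le (M : FinMDP S A) (X Y : S → ℝ) (s : S) :
    |bellman M X s - bellman M Y s| ≤ ‖X - Y‖ := by
  have key : ∀ (U V : S → ℝ), bellman M U s - bellman M V s ≤ ‖U - V‖ := by
    intro U V
    rw [sub_le_iff_le_add']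
    apply Finset.sup'_le
    intro a ha
    have h1 : ∑ s', M.P s a s' * U s' - ∑ s', M.P s a s' * V s' =
        ∑ s', M.P s a s' * (U - V) s' := by
      rw [← Finset.sum_sub_distrib]
      apply Finset.sum_congr rfl
      intro s' _
      simp [Pi.sub_apply, mul_sub]
    have h2 : ∑ s', M.P s a s' * (U - V) s' ≤ ‖U - V‖ :=
      le_trans (le_abs_self _) (row_abs_le M (U - V) s a)
    have h3 : M.r s a + ∑ s', M.P s a s' * V s' ≤ bellman M V s :=
      Finset.le_sup' (fun a => M.r s a + ∑ s', M.P s a s' * V s') ha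
    linarith
  rw [abs_sub_le_iff]
  constructor
  · exact key X Y
  · rw [norm_sub_rev]
    exact key Y X

lemma bellman_nonexp (M : FinMDP S A) (X Y : S → ℝ) :
    ‖bellman M X - bellman M Y‖ ≤ ‖X - Y‖ := by
  rw [pi_norm_le_iff_of_nonneg (norm_nonneg _)]
  intro s
  simpa [Real.norm_eq_abs] using bellman_abs_le M X Y s

lemma bellman_add_smul (M : FinMDP S A) (g : S → ℝ)
    (hPg : ∀ s a, ∑ s', M.P s a s' * g s' = g s) (X : S → ℝ) (c : ℝ) :
    bellman M (X + c • g) = bellman M X + c • g := by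
  funext s
  have hrow : ∀ a : A, ∑ s', M.P s a s' * (X + c • g) s' =
      (∑ s', M.P s a s' * X s') + c * g s := by
    intro a
    have : ∀ s', M.P s a s' * (X + c • g) s' =
        M.P s a s' * X s' + c * (M.P s a s' * g s') := by
      intro s'
      simp [Pi.add_apply, Pi.smul_apply, smul_eq_mul]
      ring
    rw [Finset.sum_congr rfl (fun s' _ => this s'), Finset.sum_add_distrib,
      ← Finset.mul_sum, hPg s a]
  show Finset.univ.sup' Finset.univ_nonempty
      (fun a => M.r s a + ∑ s', M.P s a s' * (X + c • g) s') = _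
  have : (fun a => M.r s a + ∑ s', M.P s a s' * (X + c • g) s') =
      (fun a => (M.r s a + ∑ s', M.P s a s' * X s') + c * g s) := by
    funext a
    rw [hrow a]
    ring
  rw [this, sup'_add_const]
  simp [bellman, Pi.add_apply, Pi.smul_apply, smul_eq_mul]


/-! ### The average reward of a greedy policy is close to `g`. -/

lemma avg_close (M : FinMDP S A) (g : S → ℝ)
    (hPg : Pop M p g = g) (p' : S → A) : True := trivial

lemma avg_close' (M : FinMDP S A) (g : S → ℝ) (p : S → A)
    (hPg : Pop M p g = g)
    (Vk : S → ℝ) (hg : IsGreedy M p Vk) (s : S) :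
    |g s - avgReward M p s| ≤ ‖bellman M Vk - Vk - g‖ := by
  classical
  set E : S → ℝ := bellman M Vk - Vk - g with hE
  set c : ℝ := ‖E‖ with hc
  have hc0 : 0 ≤ c := norm_nonneg _
  set B : ℝ := ‖Vk‖ with hB
  have hB0 : 0 ≤ B := norm_nonneg _
  -- the iterates formula
  have hform : ∀ t : ℕ, (Pop M p)^[t] (rPol M p) =
      (Pop M p)^[t] E + ((Pop M p)^[t] Vk - (Pop M p)^[t+1] Vk) + g := by
    intro t
    induction t with
    | zero =>
      simp only [Function.iterate_zero_apply, Function.iterate_one]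
      have hr : rPol M p = bellman M Vk - Pop M p Vk := by
        have h' := hg
        unfold IsGreedy at h'
        rw [← h']
        abel
      rw [hr, hE]
      abel
    | succ t ih =>
      rw [Function.iterate_succ_apply', ih, Pop_add, Pop_add, Pop_sub, hPg]
      simp only [← Function.iterate_succ_apply']
  -- pointwise sum formula
  have hsum : ∀ T : ℕ, ∑ t ∈ Finset.range T, ((Pop M p)^[t] (rPol M p)) s =
      (∑ t ∈ Finset.range T, ((Pop M p)^[t] E) s) +
        (Vk s - ((Pop M p)^[T] Vk) s) + T * g s := by
    intro T
    have hpt : ∀ t, ((Pop M p)^[t] (rPol M p)) s =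
        ((Pop M p)^[t] E) s + ((((Pop M p)^[t] Vk) s - (((Pop M p)^[t+1]) Vk) s) + g s) := by
      intro t
      rw [hform t]
      simp only [Pi.add_apply, Pi.sub_apply]
      ring
    rw [Finset.sum_congr rfl (fun t _ => hpt t), Finset.sum_add_distrib,
      Finset.sum_add_distrib, Finset.sum_range_sub' (fun t => ((Pop M p)^[t] Vk) s),
      Finset.sum_const, Finset.card_range]
    simp only [Function.iterate_zero_apply, nsmul_eq_mul]
    ring
  set a : ℕ → ℝ :=
    fun T => (1 / (T : ℝ)) * ∑ t ∈ Finset.range T, ((Pop M p)^[t] (rPol M p)) s with ha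
  have havg : avgReward M p s = Filter.liminf a Filter.atTop := rfl
  have habs : ∀ T : ℕ, 1 ≤ T → |a T - g s| ≤ c + 2*B/(T:ℝ) := by
    intro T hT
    have hTpos : (0:ℝ) < (T:ℝ) := by exact_mod_cast hT
    have hTne : (T:ℝ) ≠ 0 := ne_of_gt hTpos
    have h1 : a T - g s = (1/(T:ℝ)) * ((∑ t ∈ Finset.range T, ((Pop M p)^[t] E) s) +
        (Vk s - ((Pop M p)^[T] Vk) s)) := by
      rw [ha]
      simp only
      rw [hsum T]
      field_simp
      ring
    have h2 : |∑ t ∈ Finset.range T, ((Pop M p)^[t] E) s| ≤ T * c := by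
      calc |∑ t ∈ Finset.range T, ((Pop M p)^[t] E) s|
          ≤ ∑ t ∈ Finset.range T, |((Pop M p)^[t] E) s| := Finset.abs_sum_le_sum_abs _ _
        _ ≤ ∑ _t ∈ Finset.range T, c := by
            apply Finset.sum_le_sum
            intro t _
            have h3 : |((Pop M p)^[t] E) s| ≤ ‖(Pop M p)^[t] E‖ := by
              simpa [Real.norm_eq_abs] using norm_le_pi_norm ((Pop M p)^[t] E) s
            exact le_trans h3 (Pop_iter_norm_le M p t E)
        _ = T * c := by rw [Finset.sum_const, Finset.card_range, nsmul_eq_mul]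
    have h3 : |Vk s - ((Pop M p)^[T] Vk) s| ≤ 2*B := by
      have ha1 : |Vk s| ≤ B := by
        simpa [Real.norm_eq_abs] using norm_le_pi_norm Vk s
      have ha2 : |((Pop M p)^[T] Vk) s| ≤ B := by
        have := norm_le_pi_norm ((Pop M p)^[T] Vk) s
        simp only [Real.norm_eq_abs] at this
        exact le_trans this (Pop_iter_norm_le M p T Vk)
      calc |Vk s - ((Pop M p)^[T] Vk) s| ≤ |Vk s| + |((Pop M p)^[T] Vk) s| := abs_sub _ _
        _ ≤ 2*B := by linarith
    rw [h1, abs_mul, abs_of_pos (by positivity : (0:ℝ) < 1/(T:ℝ))]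
    have h4 : |(∑ t ∈ Finset.range T, ((Pop M p)^[t] E) s) +
        (Vk s - ((Pop M p)^[T] Vk) s)| ≤ T * c + 2*B := by
      calc |(∑ t ∈ Finset.range T, ((Pop M p)^[t] E) s) + (Vk s - ((Pop M p)^[T] Vk) s)|
          ≤ |∑ t ∈ Finset.range T, ((Pop M p)^[t] E) s| +
            |Vk s - ((Pop M p)^[T] Vk) s| := abs_add_le _ _
        _ ≤ T * c + 2*B := by linarith
    calc (1/(T:ℝ)) * |(∑ t ∈ Finset.range T, ((Pop M p)^[t] E) s) +
          (Vk s - ((Pop M p)^[T] Vk) s)| ≤ (1/(T:ℝ)) * (T * c + 2*B) := by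
            apply mul_le_mul_of_nonneg_left h4 (by positivity)
      _ = c + 2*B/(T:ℝ) := by field_simp
  -- eventual bounds
  have hub : ∀ᶠ T : ℕ in Filter.atTop, a T ≤ g s + c + 2*B/(T:ℝ) := by
    filter_upwards [Filter.eventually_ge_atTop 1] with T hT
    have := (abs_le.1 (habs T hT)).2
    linarith
  have hlb : ∀ᶠ T : ℕ in Filter.atTop, g s - c - 2*B/(T:ℝ) ≤ a T := by
    filter_upwards [Filter.eventually_ge_atTop 1] with T hT
    have := (abs_le.1 (habs T hT)).1
    linarith
  have htend : Filter.Tendsto (fun T : ℕ => 2*B/(T:ℝ)) Filter.atTop (nhds 0) :=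
    tendsto_const_div_atTop_nhds_zero_nat (2*B)
  have hBtail : ∀ᶠ T : ℕ in Filter.atTop, 2*B/(T:ℝ) ≤ 2*B := by
    filter_upwards [Filter.eventually_ge_atTop 1] with T hT
    have hT1 : (1:ℝ) ≤ (T:ℝ) := by exact_mod_cast hT
    exact div_le_self (by linarith) hT1
  have hbdd : Filter.IsBoundedUnder (· ≥ ·) Filter.atTop a := by
    refine ⟨g s - c - 2*B, ?_⟩
    rw [Filter.eventually_map]
    filter_upwards [hlb, hBtail] with T h1 h2
    simp only [ge_iff_le]
    linarith
  have hcob : Filter.IsCoboundedUnder (· ≥ ·) Filter.atTop a := by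
    apply Filter.isCoboundedUnder_ge_of_eventually_le Filter.atTop (x := g s + c + 2*B)
    filter_upwards [hub, hBtail] with T h1 h2
    linarith
  have hL1 : Filter.liminf a Filter.atTop ≤ g s + c := by
    apply Filter.liminf_le_of_le hbdd
    intro b hb
    have hev : ∀ᶠ T : ℕ in Filter.atTop, b ≤ g s + c + 2*B/(T:ℝ) := by
      filter_upwards [hb, hub] with T h1 h2
      linarith
    have hlim : Filter.Tendsto (fun T : ℕ => g s + c + 2*B/(T:ℝ)) Filter.atTop
        (nhds (g s + c)) := by
      have := Filter.Tendsto.add (tendsto_const_nhds (x := g s + c) (f := Filter.atTop)) htend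
      simpa using this
    exact ge_of_tendsto hlim hev
  have hL2 : g s - c ≤ Filter.liminf a Filter.atTop := by
    apply le_of_forall_sub_le
    intro ε hε
    have hεev : ∀ᶠ T : ℕ in Filter.atTop, 2*B/(T:ℝ) < ε :=
      htend.eventually_lt_const hε
    apply Filter.le_liminf_of_le hcob
    filter_upwards [hlb, hεev] with T h1 h2
    linarith
  rw [havg]
  rw [abs_le]
  constructor
  · linarith
  · linarith

/-- Corollary (Rx-VI with λ = 1/2, MDP with `P^π g⋆ = g⋆` for all policies):
`O(1/√k)` rate on the Bellman and policy errors. -/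
theorem rxvi_half_wc_rate
    (M : FinMDP S A) (g h : S → ℝ) (hsol : IsMBESolution M g h)
    (hcomm : ∀ p : S → A, Pop M p g = g)
    (V : ℕ → S → ℝ) (pol : ℕ → S → A)
    (hV : ∀ k : ℕ, V (k + 1) = (1 / 2 : ℝ) • V k + (1 / 2 : ℝ) • bellman M (V k))
    (hpol : ∀ k : ℕ, IsGreedy M (pol k) (V k)) :
    ∀ k : ℕ, 1 ≤ k →
      ‖g - avgReward M (pol k)‖ ≤ ‖bellman M (V k) - V k - g‖ ∧
      ‖bellman M (V k) - V k - g‖ ≤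
        4 * ‖V 0 - h‖ / Real.sqrt (Real.pi * (k : ℝ)) := by
  classical
  obtain ⟨hsol1, hsol2, hsol3⟩ := hsol
  have hPg : ∀ (s : S) (a : A), ∑ s', M.P s a s' * g s' = g s := by
    intro s a
    have := congrFun (hcomm (fun _ => a)) s
    simpa [Pop] using this
  intro k hk
  constructor
  · -- policy error bound
    rw [pi_norm_le_iff_of_nonneg (norm_nonneg _)]
    intro s
    have := avg_close' M g (pol k) (hcomm (pol k)) (V k) (hpol k) s
    simpa [Real.norm_eq_abs] using this
  · -- Bellman residual bound via the KM rate
    set f : (S → ℝ) → (S → ℝ) := fun X => bellman M X - g with hf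
    have hfne : ∀ X Y : S → ℝ, ‖f X - f Y‖ ≤ ‖X - Y‖ := by
      intro X Y
      have heq : f X - f Y = bellman M X - bellman M Y := by
        rw [hf]; exact sub_sub_sub_cancel_right _ _ _
      rw [heq]
      exact bellman_nonexp M X Y
    have hfh : f h = h := by
      funext s
      have := hsol2 s
      simp only [hf, Pi.sub_apply]
      linarith
    set Wseq : ℕ → (S → ℝ) := fun n => V n - ((n : ℝ)/2) • g with hWseq
    have hbsm : ∀ (X : S → ℝ) (c : ℝ), bellman M (X + c • g) = bellman M X + c • g :=
      bellman_add_smul M g hPg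
    have hbw : ∀ n : ℕ, bellman M (Wseq n) = bellman M (V n) - ((n : ℝ)/2) • g := by
      intro n
      have h1 : Wseq n + ((n : ℝ)/2) • g = V n := by
        rw [hWseq]
        simp only
        abel
      have h2 := hbsm (Wseq n) ((n : ℝ)/2)
      rw [h1] at h2
      rw [h2]
      abel
    have hWrec : ∀ n, Wseq (n+1) = (1/2 : ℝ) • Wseq n + (1/2 : ℝ) • f (Wseq n) := by
      intro n
      show V (n+1) - (((n+1 : ℕ) : ℝ)/2) • g = _
      rw [hV n]
      show _ = (1/2 : ℝ) • (V n - ((n : ℝ)/2) • g) + (1/2 : ℝ) • (bellman M (Wseq n) - g)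
      rw [hbw n]
      push_cast
      module
    have hres : f (Wseq k) - Wseq k = bellman M (V k) - V k - g := by
      show (bellman M (Wseq k) - g) - (V k - ((k : ℝ)/2) • g) = _
      rw [hbw k]
      module
    have hW0 : Wseq 0 = V 0 := by
      rw [hWseq]
      simp
    have hkm := RxVIAux.km_rate f hfne h hfh Wseq hWrec k
    rw [hres, hW0] at hkm
    set d := ‖V 0 - h‖ with hd
    have hd0 : 0 ≤ d := norm_nonneg _
    have h1 : ‖bellman M (V k) - V k - g‖ ≤ 2 * d * (2 * RxVIAux.beta k) := by
      calc ‖bellman M (V k) - V k - g‖ ≤ 2 * d * RxVIAux.uu k 0 := hkm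
        _ ≤ 2 * d * (2 * RxVIAux.beta k) := by
            apply mul_le_mul_of_nonneg_left (RxVIAux.uu_final k) (by positivity)
    have hsq : (0:ℝ) < Real.sqrt (Real.pi * k) := by
      apply Real.sqrt_pos.2
      have : (0:ℝ) < (k:ℝ) := by exact_mod_cast hk
      positivity
    have h2 : RxVIAux.beta k ≤ 1 / Real.sqrt (Real.pi * k) := by
      rw [le_div_iff₀ hsq]
      exact RxVIAux.beta_le k hk
    calc ‖bellman M (V k) - V k - g‖ ≤ 2 * d * (2 * RxVIAux.beta k) := h1
      _ = 4 * d * RxVIAux.beta k := by ring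
      _ ≤ 4 * d * (1 / Real.sqrt (Real.pi * k)) := by
          apply mul_le_mul_of_nonneg_left h2 (by positivity)
      _ = 4 * d / Real.sqrt (Real.pi * k) := by ring
end
end

section
/- Consider a finite MDP and let (g⋆, h⋆) be a solution of the modified Bellman equations. Run Rx-VI with coefficients λ_k ∈ [0,1) and starting point V^0. Then for every k ≥ 1, ‖ (V^k − V^0) / (∑_{i=1}^k (1−λ_i)) − g⋆ ‖_∞ ≤ ( 2(1 − ∏_{i=1}^k λ_i) / ∑_{i=1}^k (1−λ_i) ) · ‖V^0 − h⋆‖_∞. -/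
open Finset Filter

noncomputable section

variable {S A : Type} [Fintype S] [Nonempty S] [Fintype A] [Nonempty A]

lemma bellman_sub_le (M : FinMDP S A) (V W : S → ℝ) (s : S) :
    bellman M V s - bellman M W s ≤ ‖V - W‖ := by
  rw [sub_le_iff_le_add, bellman]
  apply Finset.sup'_le
  intro a _
  have h2 : ∑ s', M.P s a s' * V s' ≤ (∑ s', M.P s a s' * W s') + ‖V - W‖ := by
    have : ∑ s', M.P s a s' * V s' - ∑ s', M.P s a s' * W s'
        ≤ ∑ s', M.P s a s' * ‖V - W‖ := by
      rw [← Finset.sum_sub_distrib]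
      apply Finset.sum_le_sum
      intro s' _
      have h3 : V s' - W s' ≤ ‖V - W‖ := by
        have := norm_le_pi_norm (V - W) s'
        simp only [Pi.sub_apply, Real.norm_eq_abs] at this
        exact (le_abs_self _).trans this
      nlinarith [M.P_nonneg s a s']
    rw [← Finset.sum_mul, M.P_sum_one, one_mul] at this
    linarith
  have h4 : M.r s a + ∑ s', M.P s a s' * W s' ≤ bellman M W s :=
    Finset.le_sup' (fun a => M.r s a + ∑ s', M.P s a s' * W s') (Finset.mem_univ a)
  linarith

lemma bellman_nonexpansive (M : FinMDP S A) (V W : S → ℝ) :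
    ‖bellman M V - bellman M W‖ ≤ ‖V - W‖ := by
  rw [pi_norm_le_iff_of_nonneg (norm_nonneg _)]
  intro s
  simp only [Pi.sub_apply, Real.norm_eq_abs, abs_sub_le_iff]
  exact ⟨bellman_sub_le M V W s, (norm_sub_rev V W) ▸ bellman_sub_le M W V s⟩

lemma bellman_add_smul_s8 (M : FinMDP S A) (g h : S → ℝ) (hsol : IsMBESolution M g h)
    (b : ℝ) (hb : 0 ≤ b) : bellman M (h + b • g) = h + g + b • g := by
  obtain ⟨hg, hbell, p, hpg, hph⟩ := hsol
  funext s
  have hsplit : ∀ a, ∑ s', M.P s a s' * (h + b • g) s'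
      = (∑ s', M.P s a s' * h s') + b * ∑ s', M.P s a s' * g s' := by
    intro a
    rw [Finset.mul_sum, ← Finset.sum_add_distrib]
    apply Finset.sum_congr rfl
    intro s' _
    simp only [Pi.add_apply, Pi.smul_apply, smul_eq_mul]
    ring
  apply le_antisymm
  · apply Finset.sup'_le
    intro a _
    rw [hsplit a]
    have h1 : ∑ s', M.P s a s' * g s' ≤ g s := by
      rw [← hg s]
      exact Finset.le_sup' (fun a => ∑ s', M.P s a s' * g s') (Finset.mem_univ a)
    have h2 : M.r s a + ∑ s', M.P s a s' * h s' ≤ bellman M h s :=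
      Finset.le_sup' (fun a => M.r s a + ∑ s', M.P s a s' * h s') (Finset.mem_univ a)
    rw [hbell s] at h2
    simp only [Pi.add_apply, Pi.smul_apply, smul_eq_mul]
    nlinarith
  · have h5 : M.r s (p s) + ∑ s', M.P s (p s) s' * (h + b • g) s'
        ≤ bellman M (h + b • g) s :=
      Finset.le_sup' (fun a => M.r s a + ∑ s', M.P s a s' * (h + b • g) s')
        (Finset.mem_univ (p s))
    rw [hsplit (p s)] at h5
    have e1 : ∑ s', M.P s (p s) s' * g s' = g s := congrFun hpg s
    have e2 : M.r s (p s) + ∑ s', M.P s (p s) s' * h s' = h s + g s := by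
      have := congrFun hph s
      simpa [rPol, Pop] using this
    rw [e1] at h5
    simp only [Pi.add_apply, Pi.smul_apply, smul_eq_mul]
    linarith

/-- Theorem (Rx-VI, normalized iterates, general multichain MDP): rate of the
normalized iterates toward the optimal average reward `g⋆`. -/
theorem rxvi_normalized_rate
    (M : FinMDP S A) (g h : S → ℝ) (hsol : IsMBESolution M g h)
    (lam : ℕ → ℝ) (hlam : ∀ j : ℕ, 1 ≤ j → lam j ∈ Set.Ico (0 : ℝ) 1)
    (V : ℕ → S → ℝ)
    (hV : ∀ k : ℕ, V (k + 1) = lam (k + 1) • V k + (1 - lam (k + 1)) • bellman M (V k)) :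
    ∀ k : ℕ, 1 ≤ k →
      ‖(∑ i ∈ Finset.Icc 1 k, (1 - lam i))⁻¹ • (V k - V 0) - g‖ ≤
        2 * (1 - ∏ i ∈ Finset.Icc 1 k, lam i) / (∑ i ∈ Finset.Icc 1 k, (1 - lam i))
          * ‖V 0 - h‖ := by
  set β : ℕ → ℝ := fun k => ∑ i ∈ Finset.Icc 1 k, (1 - lam i) with hβ
  set Pp : ℕ → ℝ := fun k => ∏ i ∈ Finset.Icc 1 k, lam i with hPp
  have hPp0 : ∀ k, 0 ≤ Pp k := fun k =>
    Finset.prod_nonneg fun i hi => (hlam i (Finset.mem_Icc.mp hi).1).1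
  have hPp1 : ∀ k, Pp k ≤ 1 := fun k =>
    Finset.prod_le_one (fun i hi => (hlam i (Finset.mem_Icc.mp hi).1).1)
      (fun i hi => le_of_lt (hlam i (Finset.mem_Icc.mp hi).1).2)
  have hβ0 : ∀ k, 0 ≤ β k := fun k =>
    Finset.sum_nonneg fun i hi => by
      have := (hlam i (Finset.mem_Icc.mp hi).1).2; linarith
  have key : ∀ k : ℕ, ‖V k - (h + β k • g) - Pp k • (V 0 - h)‖ ≤ (1 - Pp k) * ‖V 0 - h‖ := by
    intro k
    induction k with
    | zero =>
      have h0 : Finset.Icc 1 0 = (∅ : Finset ℕ) := by decide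
      simp [hβ, hPp, h0]
    | succ k ih =>
      have hβs : β (k + 1) = β k + (1 - lam (k + 1)) :=
        Finset.sum_Icc_succ_top (Nat.le_add_left 1 k) _
      have hPps : Pp (k + 1) = Pp k * lam (k + 1) :=
        Finset.prod_Icc_succ_top (Nat.le_add_left 1 k) _
      obtain ⟨hl0, hl1⟩ := hlam (k + 1) (Nat.le_add_left 1 k)
      have hTU : bellman M (h + β k • g) = h + g + β k • g :=
        bellman_add_smul_s8 M g h hsol (β k) (hβ0 k)
      have hiden : V (k + 1) - (h + β (k + 1) • g) - Pp (k + 1) • (V 0 - h)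
          = lam (k + 1) • (V k - (h + β k • g) - Pp k • (V 0 - h))
            + (1 - lam (k + 1)) • (bellman M (V k) - bellman M (h + β k • g)) := by
        rw [hV k, hTU, hβs, hPps]
        module
      have hne : ‖bellman M (V k) - bellman M (h + β k • g)‖ ≤ ‖V k - (h + β k • g)‖ :=
        bellman_nonexpansive M _ _
      have hVk : ‖V k - (h + β k • g)‖ ≤ ‖V 0 - h‖ := by
        have h6 : V k - (h + β k • g)
            = (V k - (h + β k • g) - Pp k • (V 0 - h)) + Pp k • (V 0 - h) := by abel
        calc ‖V k - (h + β k • g)‖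
            = ‖(V k - (h + β k • g) - Pp k • (V 0 - h)) + Pp k • (V 0 - h)‖ := by
              rw [← h6]
          _ ≤ ‖V k - (h + β k • g) - Pp k • (V 0 - h)‖ + ‖Pp k • (V 0 - h)‖ :=
              norm_add_le _ _
          _ ≤ (1 - Pp k) * ‖V 0 - h‖ + Pp k * ‖V 0 - h‖ := by
              apply add_le_add ih
              rw [norm_smul, Real.norm_eq_abs, abs_of_nonneg (hPp0 k)]
          _ = ‖V 0 - h‖ := by ring
      calc ‖V (k + 1) - (h + β (k + 1) • g) - Pp (k + 1) • (V 0 - h)‖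
          ≤ ‖lam (k + 1) • (V k - (h + β k • g) - Pp k • (V 0 - h))‖
            + ‖(1 - lam (k + 1)) • (bellman M (V k) - bellman M (h + β k • g))‖ := by
            rw [hiden]; exact norm_add_le _ _
        _ = lam (k + 1) * ‖V k - (h + β k • g) - Pp k • (V 0 - h)‖
            + (1 - lam (k + 1)) * ‖bellman M (V k) - bellman M (h + β k • g)‖ := by
            rw [norm_smul, norm_smul, Real.norm_eq_abs, Real.norm_eq_abs,
              abs_of_nonneg hl0, abs_of_nonneg (by linarith)]
        _ ≤ lam (k + 1) * ((1 - Pp k) * ‖V 0 - h‖) + (1 - lam (k + 1)) * ‖V 0 - h‖ := by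
            apply add_le_add
            · exact mul_le_mul_of_nonneg_left ih hl0
            · exact mul_le_mul_of_nonneg_left (hne.trans hVk) (by linarith)
        _ ≤ (1 - Pp (k + 1)) * ‖V 0 - h‖ := by rw [hPps]; nlinarith [norm_nonneg (V 0 - h)]
  intro k hk
  have hβpos : 0 < β k := by
    apply Finset.sum_pos
    · intro i hi
      have := (hlam i (Finset.mem_Icc.mp hi).1).2; linarith
    · exact ⟨k, Finset.mem_Icc.mpr ⟨hk, le_refl k⟩⟩
  have hiden2 : (β k)⁻¹ • (V k - V 0) - g
      = (β k)⁻¹ • ((V k - (h + β k • g) - Pp k • (V 0 - h)) - (1 - Pp k) • (V 0 - h)) := by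
    have : (V k - (h + β k • g) - Pp k • (V 0 - h)) - (1 - Pp k) • (V 0 - h)
        = (V k - V 0) - β k • g := by module
    rw [this, smul_sub ((β k)⁻¹) (V k - V 0) (β k • g), smul_smul, inv_mul_cancel₀ hβpos.ne', one_smul]
  calc ‖(β k)⁻¹ • (V k - V 0) - g‖
      = (β k)⁻¹ * ‖(V k - (h + β k • g) - Pp k • (V 0 - h)) - (1 - Pp k) • (V 0 - h)‖ := by
        rw [hiden2, norm_smul, Real.norm_eq_abs, abs_of_nonneg (by positivity)]
    _ ≤ (β k)⁻¹ * ((1 - Pp k) * ‖V 0 - h‖ + (1 - Pp k) * ‖V 0 - h‖) := by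
        apply mul_le_mul_of_nonneg_left _ (by positivity)
        refine (norm_sub_le _ _).trans (add_le_add (key k) ?_)
        rw [norm_smul, Real.norm_eq_abs, abs_of_nonneg (by linarith [hPp1 k])]
    _ = 2 * (1 - Pp k) / β k * ‖V 0 - h‖ := by
        field_simp
        ring
end
end
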